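/- Let σ be a finite request sequence, let S be any minimum-cost schedule for σ, and let P be a phase of S other than the first phase, with pivot x. Then x belongs to at least one request of P. -/

import Mathlib

/-- Cost of serving request `r` when node `c` is at the center of the star. -/
def serveCost {V : Type*} [DecidableEq V] (c : V) (r : V × V) : ℕ :=
  if c = r.1 ∨ c = r.2 then 1 else 2

/-- Total cost of the schedule `cs` on request sequence `σ`, starting from
initial center `c₀`. -/
def schedCost {V : Type*} [DecidableEq V] (c₀ : V) : List (V × V) → List V → ℕ
  | [], _ => 0
  | _ :: _, [] => 0
  | r :: σ, c :: cs => (if c = c₀ then 0 else 1) + serveCost c r + schedCost c σ cs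

/-- Minimum cost over all (offline) schedules for `σ` starting with center `c₀`. -/
noncomputable def OPT {V : Type*} [DecidableEq V] (c₀ : V) (σ : List (V × V)) : ℕ :=
  sInf {k | ∃ cs : List V, cs.length = σ.length ∧ schedCost c₀ σ cs = k}

/-! If no request of a later phase touched its pivot `x`, that phase would pay one migration into
`x` and the full price 2 for every request. Keeping instead the previous center `y ≠ x` through
the phase saves that migration, pays at most 2 per request, and costs at most one migration on
leaving the phase, which the original schedule paid as well (out of `x`). The modified schedule
would be strictly cheaper than an optimal one. -/

theorem List.forall_mem_take_drop {α : Type*} {l : List α} {d : α} {P : α → Prop} {i n : ℕ}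
    (h : ∀ k, i ≤ k → k < i + n → P (l.getD k d)) : ∀ a ∈ (l.drop i).take n, P a := by
  intro a ha
  obtain ⟨k, hk, rfl⟩ := List.getElem_of_mem ha
  simp only [List.length_take, List.length_drop] at hk
  have hk' := h (i + k) (by omega) (by omega)
  rw [List.getD_eq_getElem _ _ (by omega)] at hk'
  simpa using hk'

theorem List.eq_take_append_replicate_append_drop {α : Type*} {l : List α} {d x : α}
    {i n : ℕ} (hle : i + n ≤ l.length) (hrun : ∀ k, i ≤ k → k < i + n → l.getD k d = x) :
    l = l.take i ++ List.replicate n x ++ l.drop (i + n) := by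
  have hmid : (l.drop i).take n = List.replicate n x :=
    List.eq_replicate_iff.2 ⟨by simp; omega, List.forall_mem_take_drop hrun⟩
  rw [List.append_assoc, ← hmid, ← List.drop_drop, List.take_append_drop, List.take_append_drop]

theorem List.getLastD_take {α : Type*} {l : List α} {d : α} {i : ℕ} (hi : i ≠ 0)
    (hil : i ≤ l.length) : (l.take i).getLastD d = l.getD (i - 1) d := by
  rw [List.getLastD_eq_getLast?, List.getLast?_take, if_neg hi,
    List.getElem?_eq_getElem (by omega), List.getD_eq_getElem _ _ (by omega)]
  rfl

section

variable {V : Type*} [DecidableEq V]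

theorem serveCost_le_two (c : V) (r : V × V) : serveCost c r ≤ 2 := by
  unfold serveCost; split <;> omega

theorem OPT_le_schedCost {c₀ : V} {σ : List (V × V)} {cs : List V}
    (h : cs.length = σ.length) : OPT c₀ σ ≤ schedCost c₀ σ cs :=
  Nat.sInf_le ⟨cs, h, rfl⟩

theorem schedCost_append {σ₁ : List (V × V)} {cs₁ : List V} (h : cs₁.length = σ₁.length)
    (c : V) (σ₂ : List (V × V)) (cs₂ : List V) :
    schedCost c (σ₁ ++ σ₂) (cs₁ ++ cs₂) = schedCost c σ₁ cs₁ + schedCost (cs₁.getLastD c) σ₂ cs₂ := by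
  induction σ₁ generalizing cs₁ c with
  | nil => simp_all [schedCost]
  | cons r σ₁ ih =>
    obtain _ | ⟨d, cs₁⟩ := cs₁
    · simp at h
    · simp only [List.cons_append, schedCost, List.getLastD_cons, ih (by simpa using h)]
      ring

theorem schedCost_replicate (c x : V) (σ : List (V × V)) :
    schedCost c σ (List.replicate σ.length x) =
      (if σ = [] ∨ x = c then 0 else 1) + (σ.map (serveCost x)).sum := by
  induction σ generalizing c with
  | nil => simp [schedCost]
  | cons r σ ih =>
    simp only [List.length_cons, List.replicate_succ, schedCost, ih, List.map_cons,
      List.sum_cons, reduceCtorEq, false_or]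
    split_ifs <;> simp_all
    all_goals ring

theorem schedCost_le_of_forall_head_ne {c : V} (c' : V) (σ : List (V × V)) {cs : List V}
    (h : ∀ d ∈ cs.head?, d ≠ c) : schedCost c' σ cs ≤ schedCost c σ cs := by
  obtain _ | ⟨r, σ⟩ := σ <;> obtain _ | ⟨d, cs⟩ := cs
  all_goals simp_all [schedCost]
  split_ifs <;> omega

theorem schedCost_lt_of_pivot_not_requested {c₀ x y : V} {σA σB σC : List (V × V)}
    {A C : List V} (hA : A.length = σA.length) (hy : A.getLastD c₀ = y) (hxy : x ≠ y)
    (hB : σB ≠ []) (hunreq : ∀ r ∈ σB, serveCost x r = 2) (hC : ∀ d ∈ C.head?, d ≠ x) :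
    schedCost c₀ (σA ++ σB ++ σC) (A ++ List.replicate σB.length y ++ C) <
      schedCost c₀ (σA ++ σB ++ σC) (A ++ List.replicate σB.length x ++ C) := by
  have hlen (z : V) : (A ++ List.replicate σB.length z).length = (σA ++ σB).length := by simp [hA]
  have hlast (z : V) : (A ++ List.replicate σB.length z).getLastD c₀ = z := by
    simp [List.getLastD_eq_getLast?, List.getLast?_append, List.getLast?_replicate, hB]
  have hstay : (σB.map (serveCost y)).sum ≤ σB.length • 2 := by
    simpa using List.sum_le_card_nsmul (σB.map (serveCost y)) 2
      (List.forall_mem_map.2 fun r _ => serveCost_le_two y r)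
  have hmove : (σB.map (serveCost x)).sum = σB.length • 2 := by
    simpa using List.sum_eq_card_nsmul (σB.map (serveCost x)) 2 (List.forall_mem_map.2 hunreq)
  rw [schedCost_append (hlen y), schedCost_append (hlen x), schedCost_append hA,
    schedCost_append hA, hlast, hlast, hy, schedCost_replicate, schedCost_replicate,
    if_pos (Or.inr rfl), if_neg (by simp [hB, hxy])]
  have := schedCost_le_of_forall_head_ne y σC hC
  omega

end

theorem minCost_phase_pivot_is_requested_general
    {V : Type*} [DecidableEq V]
    (c₀ : V) (σ : List (V × V))
    (cs : List V) (hlen : cs.length = σ.length)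
    (hopt : schedCost c₀ σ cs = OPT c₀ σ)
    (x : V) (i j : ℕ) (hi1 : 1 ≤ i) (hij : i ≤ j) (hjlen : j < σ.length)
    (hrun : ∀ k, i ≤ k → k ≤ j → cs.getD k c₀ = x)
    (hleft : cs.getD (i - 1) c₀ ≠ x)
    (hright : j + 1 = σ.length ∨ cs.getD (j + 1) c₀ ≠ x) :
    ∃ k, i ≤ k ∧ k ≤ j ∧
      (x = (σ.getD k (c₀, c₀)).1 ∨ x = (σ.getD k (c₀, c₀)).2) := by
  by_contra! hcon
  set n := j + 1 - i
  have hcs : cs = cs.take i ++ List.replicate n x ++ cs.drop (i + n) :=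
    List.eq_take_append_replicate_append_drop (by omega) fun k h1 h2 => hrun k h1 (by omega)
  have hσ : σ = σ.take i ++ (σ.drop i).take n ++ σ.drop (i + n) := by
    rw [List.append_assoc, ← List.drop_drop, List.take_append_drop, List.take_append_drop]
  have hBlen : ((σ.drop i).take n).length = n := by simp; omega
  have hunreq : ∀ r ∈ (σ.drop i).take n, serveCost x r = 2 :=
    List.forall_mem_take_drop fun k h1 h2 => by simpa [serveCost] using hcon k h1 (by omega)
  have hC : ∀ d ∈ (cs.drop (i + n)).head?, d ≠ x := by
    intro d hd
    rw [List.head?_drop] at hd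
    rcases hright with h | h
    · simp [List.getElem?_eq_none (by omega : cs.length ≤ i + n)] at hd
    · rwa [List.getD_eq_getElem?_getD, show j + 1 = i + n by omega, hd] at h
  have hlt := schedCost_lt_of_pivot_not_requested (σA := σ.take i) (σC := σ.drop (i + n))
    (by simp [hlen]) (List.getLastD_take (by omega) (by omega)) (Ne.symm hleft)
    (List.ne_nil_of_length_pos (by omega)) hunreq hC
  rw [hBlen, ← hσ, ← hcs] at hlt
  exact (hlt.trans_eq hopt).not_ge (OPT_le_schedCost (by simp [hlen]; omega))

/-- Let `σ` be a finite request sequence (of unordered pairs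
of distinct nodes), let `S = cs` be any minimum-cost schedule for `σ`, and let
`P` be a phase of `S` other than the first phase — a maximal run of requests
`i, …, j` with `i ≥ 1`, all served with the same center `x` (the pivot), with
`cs (i-1) ≠ x` and with either `j + 1 = |σ|` or `cs (j+1) ≠ x`.
Then `x` belongs to at least one request of `P`. -/
theorem minCost_phase_pivot_is_requested
    {V : Type*} [DecidableEq V] [Fintype V] (hn : 3 ≤ Fintype.card V)
    (c₀ : V) (σ : List (V × V)) (hσ : ∀ r ∈ σ, r.1 ≠ r.2)
    (cs : List V) (hlen : cs.length = σ.length)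
    (hopt : schedCost c₀ σ cs = OPT c₀ σ)
    (x : V) (i j : ℕ) (hi1 : 1 ≤ i) (hij : i ≤ j) (hjlen : j < σ.length)
    (hrun : ∀ k, i ≤ k → k ≤ j → cs.getD k c₀ = x)
    (hleft : cs.getD (i - 1) c₀ ≠ x)
    (hright : j + 1 = σ.length ∨ cs.getD (j + 1) c₀ ≠ x) :
    ∃ k, i ≤ k ∧ k ≤ j ∧
      (x = (σ.getD k (c₀, c₀)).1 ∨ x = (σ.getD k (c₀, c₀)).2) :=
  minCost_phase_pivot_is_requested_general c₀ σ cs hlen hopt x i j hi1 hij hjlen hrun hleft hright
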